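/- arXiv:2406.10610 — 3 statements merged into one kernel-verified Lean document; each statement's English description precedes it below -/
import Mathlib

section
/- Under the string partition setup, let W'_i = S[Ω(i), PSA[i]-1] · #_i where #_0 < #_1 < ... < #_k < $ < a for all a ∈ Σ. If S[i..] < S[j..] lexicographically (0 ≤ i, j ≤ n), then W'_{word(i)}[position(i)..] < W'_{word(j)}[position(j)..] lexicographically. -/
/-- Suffix of the extended string `S` (length `n`, sentinel `S n = 0`) starting at `i`,
as a list of characters. -/
def sfx (S : ℕ → ℕ) (n i : ℕ) : List ℕ :=
  (List.range (n + 1 - i)).map (fun t => S (i + t))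

/-- `S` is a string of length `n` over a positive alphabet with the unique smallest
sentinel `0` appended at position `n`. -/
def Sentinel (S : ℕ → ℕ) (n : ℕ) : Prop :=
  S n = 0 ∧ ∀ i < n, 0 < S i

/-- `SA` is the suffix array of `S` on positions `0..n`: a bijection of `{0,…,n}`
listing the suffixes in strictly increasing lexicographic order. -/
def IsSuffixArray (S : ℕ → ℕ) (n : ℕ) (SA : ℕ → ℕ) : Prop :=
  Set.BijOn SA (Set.Iic n) (Set.Iic n) ∧
  ∀ i j : ℕ, i ≤ n → j ≤ n → i < j →
    List.Lex (· < ·) (sfx S n (SA i)) (sfx S n (SA j))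

/-- `Ω(j) = max({-1} ∪ {t ∈ PSA : t ≤ PSA[j]-1})`, where `PSA = SA[0..k]`. -/
def Omega (SA : ℕ → ℕ) (k j : ℕ) : ℤ :=
  (insert (-1 : ℤ)
    (((Finset.range (k+1)).filter (fun t => SA t < SA j)).image
      (fun t => (SA t : ℤ)))).max' (Finset.insert_nonempty _ _)

/-- Character of `S` at an integer position: positions `-1` and `n` carry the
sentinel `0` (written `$`), characters of `Σ` are positive. -/
def Sc (S : ℕ → ℕ) (n : ℕ) (q : ℤ) : ℤ :=
  if 0 ≤ q ∧ q < n then (S q.toNat : ℤ) else 0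

/-- `BWT(S)[i] = S[SA[i]-1]` with `S[-1] = $`. -/
def bwtS (S : ℕ → ℕ) (n : ℕ) (SA : ℕ → ℕ) (i : ℕ) : ℤ :=
  Sc S n ((SA i : ℤ) - 1)

/-- The word `W_j = S[Ω(j) .. PSA[j]-1]` as a list of characters. -/
def wordList (S : ℕ → ℕ) (n : ℕ) (SA : ℕ → ℕ) (k j : ℕ) : List ℤ :=
  (List.range ((SA j : ℤ) - Omega SA k j).toNat).map
    (fun t => Sc S n (Omega SA k j + t))

/-- The marked word `W'_j = W_j · #_j`, where the distinct markers are encoded as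
`#_j = j - (k+1)`, so that `#_0 < … < #_k < $ = 0 < Σ`. -/
def wordM (S : ℕ → ℕ) (n : ℕ) (SA : ℕ → ℕ) (k j : ℕ) : List ℤ :=
  wordList S n SA k j ++ [(j : ℤ) - (k + 1)]

/-- A position `q ∈ {0,…,n}` of `S` viewed in `{-1,…,n-1}`: position `n` is
identified with `-1` (first right rotation). -/
def posZ (n q : ℕ) : ℤ := if q = n then -1 else (q : ℤ)

/-- `SAW`/`DAW` form the (suffix array, document array) pair for the collection
`Wc 0, …, Wc (l-1)`: the `i`-th lexicographically smallest of the `m` suffixes of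
the collection is `(Wc (DAW i)).drop (SAW i)`. -/
def IsMSA (Wc : ℕ → List ℤ) (l m : ℕ) (SAW DAW : ℕ → ℕ) : Prop :=
  (∀ i < m, DAW i < l ∧ SAW i < (Wc (DAW i)).length) ∧
  (∀ j < l, ∀ p < (Wc j).length, ∃! i, i < m ∧ DAW i = j ∧ SAW i = p) ∧
  ∀ i j : ℕ, i < m → j < m → i < j →
    List.Lex (· < ·) ((Wc (DAW i)).drop (SAW i)) ((Wc (DAW j)).drop (SAW j))

/-- Multi-string BWT: the character cyclically preceding the `i`-th smallest
suffix within its word. -/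
def bwtW (Wc : ℕ → List ℤ) (SAW DAW : ℕ → ℕ) (i : ℕ) : ℤ :=
  (Wc (DAW i)).getD ((SAW i + (Wc (DAW i)).length - 1) % (Wc (DAW i)).length) 0

/-!
Compare the two suffixes of `S` at their first mismatch `m`. If both word suffixes are still
inside their words at `m`, they inherit the mismatch. Otherwise the word of `i` ends no later
than the word of `j`: were the word of `j` to end first, after `ℓ` letters, at the PSA position
`SA wj = j + ℓ`, then the suffix at `i + ℓ` would rank before it, so `i + ℓ` would lie in PSA
strictly inside the word of `i`, against the maximality of `Ω`. If the word of `i` ends first,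
its marker is below every letter. If both end after `ℓ` letters, at `SA wi = i + ℓ` and
`SA wj = j + ℓ`, the suffixes there still compare like those at `i` and `j`, so `wi < wj` and
the markers `#_wi < #_wj` compare the right way.
-/

namespace List

variable {α : Type*}

theorem lex_map_range_iff [LT α] {f g : ℕ → α} {a b : ℕ} :
    Lex (· < ·) ((range a).map f) ((range b).map g) ↔
      (a < b ∧ ∀ t < a, f t = g t) ∨ ∃ m < a, m < b ∧ (∀ t < m, f t = g t) ∧ f m < g m := by
  rw [lex_lt, List.lt_iff_exists]
  simp only [length_map, length_range, getElem_map, getElem_range, ← map_take, take_range]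
  refine or_congr ?_
    ⟨fun ⟨m, hma, hmb, h⟩ => ⟨m, hma, hmb, h⟩, fun ⟨m, hma, hmb, h⟩ => ⟨m, hma, hmb, h⟩⟩
  rw [and_comm]
  refine and_congr_right fun hab => ?_
  rw [Nat.min_eq_left hab.le, map_inj_left]
  simp only [mem_range]

theorem map_range_append_singleton (f : ℕ → α) (x : α) (ℓ : ℕ) :
    (range ℓ).map f ++ [x] = (range (ℓ + 1)).map (fun t => if t < ℓ then f t else x) := by
  rw [range_succ, map_append, map_cons, map_nil, if_neg (lt_irrefl ℓ)]
  congr 1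
  exact map_congr_left fun t ht => (if_pos (mem_range.1 ht)).symm

/-- Two letter sequences, each closed by an end-marker, compared at their first mismatch `m`
or, if one of them ends first, at its marker. -/
theorem lex_map_range_append_singleton [LinearOrder α] {u v : ℕ → α} {x y : α} {ℓ₁ ℓ₂ m : ℕ}
    (hpre : ∀ t < m, u t = v t) (hm : m < ℓ₁ → m < ℓ₂ → u m < v m)
    (hx : ∀ t < ℓ₂, x < v t) (hlen : ℓ₂ ≤ m → ℓ₁ ≤ ℓ₂) (hxy : ℓ₁ = ℓ₂ → ℓ₁ ≤ m → x < y) :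
    Lex (· < ·) ((range ℓ₁).map u ++ [x]) ((range ℓ₂).map v ++ [y]) := by
  rw [map_range_append_singleton, map_range_append_singleton, lex_map_range_iff]
  right
  by_cases h : m < ℓ₁ ∧ m < ℓ₂
  · refine ⟨m, by omega, by omega, fun t ht => ?_, ?_⟩
    · rw [if_pos (by omega), if_pos (by omega), hpre t ht]
    · rw [if_pos h.1, if_pos h.2]
      exact hm h.1 h.2
  · have hℓ : ℓ₁ ≤ m ∧ ℓ₁ ≤ ℓ₂ := by
      rcases Nat.lt_or_ge m ℓ₂ with h₂ | h₂
      · omega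
      · exact ⟨(hlen h₂).trans h₂, hlen h₂⟩
    refine ⟨ℓ₁, by omega, by omega, fun t ht => ?_, ?_⟩
    · rw [if_pos ht, if_pos (by omega), hpre t (by omega)]
    · rw [if_neg (lt_irrefl ℓ₁)]
      rcases hℓ.2.lt_or_eq with hlt | heq
      · rw [if_pos hlt]
        exact hx ℓ₁ hlt
      · rw [if_neg heq.not_lt]
        exact hxy heq hℓ.1

end List

section Suffixes

variable {S SA : ℕ → ℕ} {n : ℕ}

/-- A suffix cannot be a proper prefix of another one: its sentinel `S n = 0` would face a
positive letter. -/
theorem Sentinel.exists_mismatch_of_sfx_lt (hS : Sentinel S n) {i j : ℕ} (hi : i ≤ n)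
    (h : List.Lex (· < ·) (sfx S n i) (sfx S n j)) :
    ∃ m, i + m ≤ n ∧ j + m ≤ n ∧ (∀ t < m, S (i + t) = S (j + t)) ∧ S (i + m) < S (j + m) := by
  rcases List.lex_map_range_iff.1 h with ⟨hlen, hpre⟩ | ⟨m, hmi, hmj, hpre, hm⟩
  · have hend := hpre (n - i) (by omega)
    rw [Nat.add_sub_cancel' hi, hS.1] at hend
    have := hS.2 (j + (n - i)) (by omega)
    omega
  · exact ⟨m, by omega, by omega, hpre, hm⟩

theorem sfx_add_lt_sfx_add {i j m ℓ : ℕ} (him : i + m ≤ n) (hjm : j + m ≤ n)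
    (hpre : ∀ t < m, S (i + t) = S (j + t)) (hm : S (i + m) < S (j + m)) (hℓ : ℓ ≤ m) :
    List.Lex (· < ·) (sfx S n (i + ℓ)) (sfx S n (j + ℓ)) := by
  refine List.lex_map_range_iff.2 (Or.inr ⟨m - ℓ, by omega, by omega, fun t ht => ?_, ?_⟩)
  · simpa only [Nat.add_assoc] using hpre (ℓ + t) (by omega)
  · simpa only [Nat.add_assoc, Nat.add_sub_cancel' hℓ] using hm

theorem IsSuffixArray.lt_of_sfx_lt (hSA : IsSuffixArray S n SA) {a b : ℕ} (ha : a ≤ n)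
    (hb : b ≤ n) (h : List.Lex (· < ·) (sfx S n (SA a)) (sfx S n (SA b))) : a < b := by
  rcases lt_trichotomy a b with hab | rfl | hba
  · exact hab
  · exact absurd h (List.lt_irrefl _)
  · exact absurd (hSA.2 b a hb ha hba) (List.lt_asymm h)

theorem IsSuffixArray.exists_lt_of_sfx_lt (hSA : IsSuffixArray S n SA) {p b : ℕ} (hp : p ≤ n)
    (hb : b ≤ n) (h : List.Lex (· < ·) (sfx S n p) (sfx S n (SA b))) : ∃ r < b, SA r = p := by
  obtain ⟨r, hr, rfl⟩ := hSA.1.2.2 (Set.mem_Iic.2 hp)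
  exact ⟨r, hSA.lt_of_sfx_lt hr hb h, rfl⟩

end Suffixes

section Words

variable {S SA : ℕ → ℕ} {n k : ℕ}

theorem Sc_nonneg (S : ℕ → ℕ) (n : ℕ) (q : ℤ) : 0 ≤ Sc S n q := by
  unfold Sc
  split <;> positivity

theorem Sc_posZ_add (hS : Sentinel S n) {i t : ℕ} (h : i + t ≤ n) :
    Sc S n (posZ n i + t) = S (i + t) := by
  unfold Sc posZ
  by_cases hin : i = n
  · obtain rfl : t = 0 := by omega
    simp [hin, hS.1]
  · rw [if_neg hin]
    rcases h.lt_or_eq with hlt | heq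
    · rw [if_pos (by omega)]
      congr
    · rw [if_neg (by omega), heq, hS.1]
      simp

theorem le_Omega {k w r : ℕ} (hr : r ≤ k) (h : SA r < SA w) : (SA r : ℤ) ≤ Omega SA k w := by
  unfold Omega
  apply Finset.le_max'
  exact Finset.mem_insert_of_mem <| Finset.mem_image.2
    ⟨r, Finset.mem_filter.2 ⟨Finset.mem_range.2 (Nat.lt_succ_of_le hr), h⟩, rfl⟩

/-- `wordList` reaches `List ℤ` by coercing `List.range …` through the list monad. -/
theorem wordList_eq (S : ℕ → ℕ) (n : ℕ) (SA : ℕ → ℕ) (k w : ℕ) :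
    wordList S n SA k w = (List.range ((SA w : ℤ) - Omega SA k w).toNat).map
      (fun t : ℕ => Sc S n (Omega SA k w + t)) := by
  simp [wordList, ← List.map_eq_flatMap]

/-- The number of letters of `W_w` from position `posZ n i` on. -/
def restLen (SA : ℕ → ℕ) (n w i : ℕ) : ℕ := ((SA w : ℤ) - posZ n i).toNat

theorem wordM_drop {w i : ℕ} (h₁ : Omega SA k w ≤ posZ n i) (h₂ : posZ n i ≤ SA w) :
    (wordM S n SA k w).drop (posZ n i - Omega SA k w).toNat =
      (List.range (restLen SA n w i)).map (fun t : ℕ => Sc S n (posZ n i + t)) ++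
        [(w : ℤ) - (k + 1)] := by
  have hlen : ((SA w : ℤ) - Omega SA k w).toNat =
      (posZ n i - Omega SA k w).toNat + restLen SA n w i := by
    unfold restLen
    omega
  rw [wordM, wordList_eq, hlen, List.range_add, List.map_append, List.append_assoc,
    List.drop_left' (by simp), List.map_map]
  congr 2
  funext t
  simp only [Function.comp_apply, Nat.cast_add]
  congr 1
  omega

theorem SA_eq_add_restLen {w i : ℕ} (h : posZ n i ≤ SA w) (hn : i + restLen SA n w i ≤ n) :
    SA w = i + restLen SA n w i := by
  unfold restLen posZ at *
  split_ifs at * <;> omega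

theorem restLen_le_of_sfx_lt (hSA : IsSuffixArray S n SA) {w w' i ℓ : ℕ}
    (hΩ : Omega SA k w ≤ posZ n i) (hw' : w' ≤ k) (hkn : k ≤ n) (hℓ : 0 < ℓ) (hiℓ : i + ℓ ≤ n)
    (h : List.Lex (· < ·) (sfx S n (i + ℓ)) (sfx S n (SA w'))) : restLen SA n w i ≤ ℓ := by
  obtain ⟨r, hrw', hr⟩ := hSA.exists_lt_of_sfx_lt hiℓ (hw'.trans hkn) h
  have hin : posZ n i = i := if_neg (by omega)
  by_contra hlt
  have := le_Omega (k := k) (w := w) (by omega : r ≤ k)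
    (by unfold restLen at hlt; omega : SA r < SA w)
  omega

end Words

/-- `wi` and `wj` are `word(i)` and `word(j)`, pinned down by the intervals `hii` and `hjj`. -/
theorem suffix_order_transfers_general (S SA : ℕ → ℕ) (n k : ℕ) (hk : k < n)
    (hS : Sentinel S n) (hSA : IsSuffixArray S n SA)
    (i j wi wj : ℕ) (hi : i ≤ n) (hwi : wi ≤ k) (hwj : wj ≤ k)
    (hii : Omega SA k wi ≤ posZ n i ∧ posZ n i ≤ (SA wi : ℤ) - 1)
    (hjj : Omega SA k wj ≤ posZ n j ∧ posZ n j ≤ (SA wj : ℤ) - 1)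
    (hlt : List.Lex (· < ·) (sfx S n i) (sfx S n j)) :
    List.Lex (· < ·)
      ((wordM S n SA k wi).drop (posZ n i - Omega SA k wi).toNat)
      ((wordM S n SA k wj).drop (posZ n j - Omega SA k wj).toNat) := by
  obtain ⟨m, him, hjm, hpre, hmis⟩ := hS.exists_mismatch_of_sfx_lt hi hlt
  have hletters {p t : ℕ} (h : p + t ≤ n) : Sc S n (posZ n p + t) = S (p + t) :=
    Sc_posZ_add hS h
  have hsfx {ℓ : ℕ} (hℓ : ℓ ≤ m) : List.Lex (· < ·) (sfx S n (i + ℓ)) (sfx S n (j + ℓ)) :=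
    sfx_add_lt_sfx_add him hjm hpre hmis hℓ
  rw [wordM_drop hii.1 (by omega), wordM_drop hjj.1 (by omega)]
  apply List.lex_map_range_append_singleton (m := m)
  · intro t ht
    rw [hletters (by omega), hletters (by omega), hpre t ht]
  · intro _ _
    rw [hletters him, hletters hjm]
    exact_mod_cast hmis
  · exact fun t _ => (by omega : (wi : ℤ) - (k + 1) < 0).trans_le (Sc_nonneg S n _)
  · intro hℓj
    have hSAwj := SA_eq_add_restLen (by omega) (by omega : j + restLen SA n wj j ≤ n)
    refine restLen_le_of_sfx_lt hSA hii.1 hwj hk.le (by unfold restLen; omega) (by omega) ?_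
    rw [hSAwj]
    exact hsfx hℓj
  · intro hℓ hℓm
    have hendi : i + restLen SA n wi i ≤ n := by omega
    have hendj : j + restLen SA n wj j ≤ n := by omega
    have hwiwj : wi < wj := by
      refine hSA.lt_of_sfx_lt (by omega) (by omega) ?_
      rw [SA_eq_add_restLen (by omega) hendi, SA_eq_add_restLen (by omega) hendj, ← hℓ]
      exact hsfx hℓm
    omega

/-- if `S[i..] < S[j..]`, then
`W'_{word(i)}[position(i)..] < W'_{word(j)}[position(j)..]`, where `wi = word(i)`
and `wj = word(j)` are characterized by interval membership (position `n` is
identified with `-1` via `posZ`). -/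
theorem suffix_order_transfers (S SA : ℕ → ℕ) (n k : ℕ) (hk : k < n)
    (hS : Sentinel S n) (hSA : IsSuffixArray S n SA)
    (i j wi wj : ℕ) (hi : i ≤ n) (hj : j ≤ n) (hwi : wi ≤ k) (hwj : wj ≤ k)
    (hii : Omega SA k wi ≤ posZ n i ∧ posZ n i ≤ (SA wi : ℤ) - 1)
    (hjj : Omega SA k wj ≤ posZ n j ∧ posZ n j ≤ (SA wj : ℤ) - 1)
    (hlt : List.Lex (· < ·) (sfx S n i) (sfx S n j)) :
    List.Lex (· < ·)
      ((wordM S n SA k wi).drop (posZ n i - Omega SA k wi).toNat)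
      ((wordM S n SA k wj).drop (posZ n j - Omega SA k wj).toNat) :=
  suffix_order_transfers_general S SA n k hk hS hSA i j wi wj hi hwi hwj hii hjj hlt
end

section
/- The intervals [Ω(j), PSA[j]-1] for j = 0,...,k are pairwise disjoint and their union is {-1, 0, ..., n-1}; equivalently, the words W_j = S[Ω(j), PSA[j]-1], concatenated in the order of their appearance in S, form a partition of the first right rotation $ · S[0..n-1] of S. -/
lemma sfx_cons (S : ℕ → ℕ) (n m : ℕ) (h : m ≤ n) :
    ∃ L, sfx S n m = S m :: L := by
  have : n + 1 - m = (n - m) + 1 := by omega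
  refine ⟨(List.range (n - m)).map (fun t => S (m + (t+1))), ?_⟩
  simp [sfx, this, List.range_succ_eq_map, List.map_map, Function.comp]

lemma SA_zero (S SA : ℕ → ℕ) (n : ℕ) (hS : Sentinel S n)
    (hSA : IsSuffixArray S n SA) : SA 0 = n := by
  obtain ⟨i, hi, hSAi⟩ := hSA.1.2.2 (Set.mem_Iic.mpr (le_refl n))
  by_contra h
  have hi0 : 0 < i := by
    rcases Nat.eq_zero_or_pos i with rfl | hp
    · exact absurd hSAi h
    · exact hp
  have hlex := hSA.2 0 i (Nat.zero_le n) hi hi0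
  have hn : sfx S n (SA i) = [0] := by
    rw [hSAi]; simp [sfx, List.range_succ, hS.1]
  have h0 : SA 0 ≤ n := hSA.1.1 (Set.mem_Iic.mpr (Nat.zero_le n))
  obtain ⟨L, hL⟩ := sfx_cons S n (SA 0) h0
  rw [hn, hL] at hlex
  revert hlex
  generalize S (SA 0) = a
  intro hlex
  cases hlex with
  | rel hr => exact absurd hr (Nat.not_lt_zero _)
  | cons ht => cases ht

lemma neg_one_le_omega (SA : ℕ → ℕ) (k j : ℕ) : (-1 : ℤ) ≤ Omega SA k j :=
  Finset.le_max' _ _ (Finset.mem_insert_self _ _)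

lemma omega_le (SA : ℕ → ℕ) (k j : ℕ) : Omega SA k j ≤ (SA j : ℤ) - 1 := by
  apply Finset.max'_le
  intro y hy
  rcases Finset.mem_insert.mp hy with rfl | hy
  · have : (0:ℤ) ≤ (SA j : ℤ) := Int.natCast_nonneg _
    omega
  · obtain ⟨t, ht, rfl⟩ := Finset.mem_image.mp hy
    have := (Finset.mem_filter.mp ht).2
    omega

lemma le_omega (SA : ℕ → ℕ) (k j t : ℕ) (ht : t ≤ k) (h : SA t < SA j) :
    (SA t : ℤ) ≤ Omega SA k j := by
  apply Finset.le_max'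
  exact Finset.mem_insert_of_mem (Finset.mem_image_of_mem _
    (Finset.mem_filter.mpr ⟨Finset.mem_range.mpr (by omega), h⟩))

lemma omega_cases (SA : ℕ → ℕ) (k j : ℕ) :
    Omega SA k j = -1 ∨ ∃ t ≤ k, SA t < SA j ∧ Omega SA k j = (SA t : ℤ) := by
  have hm := Finset.max'_mem _ (Finset.insert_nonempty (-1 : ℤ)
    (((Finset.range (k+1)).filter (fun t => SA t < SA j)).image (fun t => (SA t : ℤ))))
  rcases Finset.mem_insert.mp hm with h | h
  · exact Or.inl h
  · obtain ⟨t, ht, hv⟩ := Finset.mem_image.mp h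
    obtain ⟨htk, hlt⟩ := Finset.mem_filter.mp ht
    exact Or.inr ⟨t, Nat.lt_succ_iff.mp (Finset.mem_range.mp htk), hlt, hv.symm⟩

lemma disj_of_lt (S SA : ℕ → ℕ) (n k : ℕ) (hk : k < n)
    (hSA : IsSuffixArray S n SA) {i j : ℕ} (hi : i ≤ k) (hj : j ≤ k)
    (hlt : SA i < SA j) :
    Disjoint (Set.Icc (Omega SA k i) ((SA i : ℤ) - 1))
             (Set.Icc (Omega SA k j) ((SA j : ℤ) - 1)) := by
  rw [Set.disjoint_left]
  rintro q ⟨_, hq2⟩ ⟨hq3, _⟩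
  have := le_omega SA k j i hi hlt
  omega

/-- the intervals `[Ω(j), PSA[j]-1]`, `j = 0,…,k`, are pairwise
disjoint and their union is `{-1, 0, …, n-1}`: the words `W_j` form a partition
of the first right rotation of `S`. -/
theorem intervals_partition (S SA : ℕ → ℕ) (n k : ℕ) (hk : k < n)
    (hS : Sentinel S n) (hSA : IsSuffixArray S n SA) :
    (∀ i ≤ k, ∀ j ≤ k, i ≠ j →
      Disjoint (Set.Icc (Omega SA k i) ((SA i : ℤ) - 1))
               (Set.Icc (Omega SA k j) ((SA j : ℤ) - 1))) ∧
    (⋃ j ∈ Finset.range (k+1), Set.Icc (Omega SA k j) ((SA j : ℤ) - 1))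
      = Set.Icc (-1 : ℤ) ((n : ℤ) - 1) := by
  have hmaps : ∀ t ≤ k, SA t ≤ n := fun t ht =>
    hSA.1.1 (Set.mem_Iic.mpr (by omega))
  have hinj : ∀ i ≤ k, ∀ j ≤ k, i ≠ j → SA i ≠ SA j := by
    intro i hi j hj hne heq
    exact hne (hSA.1.2.1 (Set.mem_Iic.mpr (by omega)) (Set.mem_Iic.mpr (by omega)) heq)
  constructor
  · intro i hi j hj hne
    rcases lt_trichotomy (SA i) (SA j) with h | h | h
    · exact disj_of_lt S SA n k hk hSA hi hj h
    · exact absurd h (hinj i hi j hj hne)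
    · exact (disj_of_lt S SA n k hk hSA hj hi h).symm
  · ext q
    simp only [Set.mem_iUnion, Set.mem_Icc, Finset.mem_range, Nat.lt_succ_iff]
    constructor
    · rintro ⟨j, hj, h1, h2⟩
      have := neg_one_le_omega SA k j
      have := hmaps j hj
      omega
    · rintro ⟨hq1, hq2⟩
      -- find minimal SA j over j ≤ k with q < SA j
      have hne : ((Finset.range (k+1)).filter (fun t => q < (SA t : ℤ))).Nonempty := by
        refine ⟨0, Finset.mem_filter.mpr ⟨Finset.mem_range.mpr (by omega), ?_⟩⟩
        rw [SA_zero S SA n hS hSA]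
        omega
      obtain ⟨j, hjmem, hjmin⟩ := Finset.exists_min_image _ SA hne
      obtain ⟨hjk, hjq⟩ := Finset.mem_filter.mp hjmem
      have hjk' : j ≤ k := Nat.lt_succ_iff.mp (Finset.mem_range.mp hjk)
      refine ⟨j, hjk', ?_, by omega⟩
      rcases omega_cases SA k j with h | ⟨t, htk, hlt, heq⟩
      · omega
      · rw [heq]
        by_contra hc
        push_neg at hc
        have : q < (SA t : ℤ) := by omega
        have := hjmin t (Finset.mem_filter.mpr ⟨Finset.mem_range.mpr (by omega), this⟩)
        omega
end

section
/- Under the partition setup, if S[i+b..] < S[j+b..] for all 0 ≤ b < c and none of the positions i, i+1, ..., i+c-1 belongs to PSA, then none of the positions j, j+1, ..., j+c-1 belongs to PSA. -/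
/-- if `S[i+b..] < S[j+b..]` for all `0 ≤ b < c` and none of
`i, …, i+c-1` belongs to `PSA = SA[0..k]`, then none of `j, …, j+c-1` belongs to
`PSA`. -/
theorem not_in_psa_transfers (S SA : ℕ → ℕ) (n k : ℕ) (hk : k < n)
    (hS : Sentinel S n) (hSA : IsSuffixArray S n SA)
    (i j c : ℕ) (hic : i + c ≤ n + 1) (hjc : j + c ≤ n + 1)
    (hlt : ∀ b < c, List.Lex (· < ·) (sfx S n (i + b)) (sfx S n (j + b)))
    (hni : ∀ b < c, ¬ ∃ r ≤ k, SA r = i + b) :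
    ∀ b < c, ¬ ∃ r ≤ k, SA r = j + b := by
  intro b hb ⟨r, hr, hSAr⟩
  have hib : i + b ≤ n := by omega
  have hjb : j + b ≤ n := by omega
  -- surjectivity: get r' with SA r' = i + b
  obtain ⟨r', hr'mem, hSAr'⟩ := hSA.1.surjOn (Set.mem_Iic.mpr hib)
  have hr'n : r' ≤ n := hr'mem
  have hrn : r ≤ n := le_trans hr (le_of_lt hk)
  have hlex := hlt b hb
  rcases lt_trichotomy r r' with h | h | h
  · have := hSA.2 r r' hrn hr'n h
    rw [hSAr, hSAr'] at this
    exact asymm hlex this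
  · rw [← h, hSAr] at hSAr'
    rw [hSAr'] at hlex
    exact asymm hlex hlex
  · exact hni b hb ⟨r', by omega, hSAr'⟩
end
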